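/- For the projective Weyl tensor W of Θ_{A,B,C,D,E} on ℂ³, the following component formulas hold: W(e₁,e₂)e₁ = W(e₁,e₂)e₂ = −(1/8)(C−D)²·e₁ + (1/8)(C−D)²·e₂; W(e₁,e₂)e₃ = 0; W(e₃,e₁)e₁ = W(e₃,e₁)e₂ = W(e₃,e₂)e₂ = (1/8)(C−D)²·e₃; W(e₂,e₃)e₁ = −(1/8)(C−D)²·e₃; W(e₃,e₁)e₃ = (1/4)(A+B)(D−C)·e₁ + (1/2)B(C−D)·e₂; W(e₂,e₃)e₃ = (1/2)A(C−D)·e₁ + (1/4)(A+B)(D−C)·e₂. -/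

import Mathlib

noncomputable section

/-- `ℂ³`. -/
abbrev V3 : Type := Fin 3 → ℂ

/-- The standard basis of `ℂ³`: `e 0 = e₁ = ∂/∂z₁`, `e 1 = e₂ = ∂/∂z₂`, `e 2 = e₃ = ∂/∂τ`. -/
def e (i : Fin 3) : V3 := Pi.single i 1

/-- The curvature tensor `R(X,Y)Z = Θ(X,Θ(Y,Z)) − Θ(Y,Θ(X,Z))`. -/
def curv (Θ : V3 →ₗ[ℂ] V3 →ₗ[ℂ] V3) (X Y Z : V3) : V3 :=
  Θ X (Θ Y Z) - Θ Y (Θ X Z)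

/-- `TrR(X,Y) = tr (Z ↦ R(X,Y)Z)`. -/
def trR (Θ : V3 →ₗ[ℂ] V3 →ₗ[ℂ] V3) (X Y : V3) : ℂ :=
  LinearMap.trace ℂ V3 ((Θ X) ∘ₗ (Θ Y) - (Θ Y) ∘ₗ (Θ X))

/-- `Ricci(Y,Z) = tr (X ↦ R(X,Y)Z)`. -/
def ricci (Θ : V3 →ₗ[ℂ] V3 →ₗ[ℂ] V3) (Y Z : V3) : ℂ :=
  LinearMap.trace ℂ V3 (Θ.flip (Θ Y Z) - (Θ Y) ∘ₗ (Θ.flip Z))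

/-- The projective Weyl tensor in dimension three. -/
def weyl (Θ : V3 →ₗ[ℂ] V3 →ₗ[ℂ] V3) (X Y Z : V3) : V3 :=
  curv Θ X Y Z - ((1/4 : ℂ) * trR Θ X Y) • Z
    - (1/2 : ℂ) • (ricci Θ Y Z • X - ricci Θ X Z • Y)
    - (1/8 : ℂ) • (trR Θ Y Z • X - trR Θ X Z • Y)

/-! `TrR(X,Y)` is the trace of the commutator `[Θ X, Θ Y]`, so it vanishes and the Weyl tensor reduces
to `R(X,Y)Z − ½ (Ricci(Y,Z) X − Ricci(X,Z) Y)`. For symmetric `Θ` the Ricci form is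
`tr Θ_{Θ(Y,Z)} − tr (Θ_Y ∘ Θ_Z)`, which for `Θ_{A,B,C,D,E}` is an explicit symmetric matrix; the
components of `W` then follow by expanding `R` on the standard basis. -/

theorem trR_eq_zero (Θ : V3 →ₗ[ℂ] V3 →ₗ[ℂ] V3) (X Y : V3) : trR Θ X Y = 0 := by
  rw [trR, map_sub, LinearMap.trace_comp_comm', sub_self]

theorem weyl_eq_curv_sub_ricci (Θ : V3 →ₗ[ℂ] V3 →ₗ[ℂ] V3) (X Y Z : V3) :
    weyl Θ X Y Z = curv Θ X Y Z - (1/2 : ℂ) • (ricci Θ Y Z • X - ricci Θ X Z • Y) := by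
  simp only [weyl, trR_eq_zero, mul_zero, zero_smul, sub_zero, smul_zero]

theorem ricci_eq_of_symm {Θ : V3 →ₗ[ℂ] V3 →ₗ[ℂ] V3} (hΘ : ∀ x y : V3, Θ x y = Θ y x)
    (Y Z : V3) :
    ricci Θ Y Z = LinearMap.trace ℂ V3 (Θ (Θ Y Z)) - LinearMap.trace ℂ V3 (Θ Y ∘ₗ Θ Z) := by
  have hflip (W : V3) : Θ.flip W = Θ W := LinearMap.ext fun x => hΘ x W
  rw [ricci, map_sub, hflip, hflip]

theorem trace_eq_sum_apply_e (f : V3 →ₗ[ℂ] V3) :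
    LinearMap.trace ℂ V3 f = f (e 0) 0 + f (e 1) 1 + f (e 2) 2 := by
  rw [LinearMap.trace_eq_matrix_trace ℂ (Pi.basisFun ℂ (Fin 3))]
  simp [Matrix.trace, Fin.sum_univ_three, e]

structure IsTheta (A B C D E : ℂ) (Θ : V3 →ₗ[ℂ] V3 →ₗ[ℂ] V3) : Prop where
  symm : ∀ x y : V3, Θ x y = Θ y x
  e00 : Θ (e 0) (e 0) = C • e 0
  e11 : Θ (e 1) (e 1) = D • e 1
  e22 : Θ (e 2) (e 2) = A • e 0 + B • e 1 + E • e 2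
  e01 : Θ (e 0) (e 1) = (C/2) • e 0 + (D/2) • e 1
  e02 : Θ (e 0) (e 2) = (E/2) • e 0 + (C/2) • e 2
  e12 : Θ (e 1) (e 2) = (E/2) • e 1 + (D/2) • e 2

namespace IsTheta

variable {A B C D E : ℂ} {Θ : V3 →ₗ[ℂ] V3 →ₗ[ℂ] V3}

theorem e10 (h : IsTheta A B C D E Θ) : Θ (e 1) (e 0) = (C/2) • e 0 + (D/2) • e 1 :=
  (h.symm _ _).trans h.e01

theorem e20 (h : IsTheta A B C D E Θ) : Θ (e 2) (e 0) = (E/2) • e 0 + (C/2) • e 2 :=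
  (h.symm _ _).trans h.e02

theorem e21 (h : IsTheta A B C D E Θ) : Θ (e 2) (e 1) = (E/2) • e 1 + (D/2) • e 2 :=
  (h.symm _ _).trans h.e12

theorem ricci_apply (h : IsTheta A B C D E Θ) (i j : Fin 3) :
    ricci Θ (e i) (e j) =
      !![(C^2 + 2*C*D - D^2)/4, (C^2 + D^2)/4, C*E/2;
         (C^2 + D^2)/4, (D^2 + 2*C*D - C^2)/4, D*E/2;
         C*E/2, D*E/2, ((A+B)*(C+D) + E^2)/2] i j := by
  rw [ricci_eq_of_symm h.symm, trace_eq_sum_apply_e, trace_eq_sum_apply_e]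
  fin_cases i <;> fin_cases j <;>
  · simp only [Fin.zero_eta, Fin.mk_one, Fin.reduceFinMk, LinearMap.comp_apply, h.e00, h.e11,
      h.e22, h.e01, h.e02, h.e12, h.e10, h.e20, h.e21, map_add, map_smul, LinearMap.add_apply,
      LinearMap.smul_apply]
    simp [e]
    ring

end IsTheta

/-- Component formulas for the projective Weyl tensor of `Θ_{A,B,C,D,E}` on `ℂ³`
(`e₁ = e 0`, `e₂ = e 1`, `e₃ = e 2`). -/
theorem stmt_10 (A B C D E : ℂ)
    (Θ : V3 →ₗ[ℂ] V3 →ₗ[ℂ] V3)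
    (hsymm : ∀ x y : V3, Θ x y = Θ y x)
    (h11 : Θ (e 0) (e 0) = C • e 0)
    (h22 : Θ (e 1) (e 1) = D • e 1)
    (h33 : Θ (e 2) (e 2) = A • e 0 + B • e 1 + E • e 2)
    (h12 : Θ (e 0) (e 1) = (C/2) • e 0 + (D/2) • e 1)
    (h13 : Θ (e 0) (e 2) = (E/2) • e 0 + (C/2) • e 2)
    (h23 : Θ (e 1) (e 2) = (E/2) • e 1 + (D/2) • e 2)
    :
    weyl Θ (e 0) (e 1) (e 0) = -((C-D)^2/8) • e 0 + ((C-D)^2/8) • e 1 ∧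
    weyl Θ (e 0) (e 1) (e 1) = -((C-D)^2/8) • e 0 + ((C-D)^2/8) • e 1 ∧
    weyl Θ (e 0) (e 1) (e 2) = 0 ∧
    weyl Θ (e 2) (e 0) (e 0) = ((C-D)^2/8) • e 2 ∧
    weyl Θ (e 2) (e 0) (e 1) = ((C-D)^2/8) • e 2 ∧
    weyl Θ (e 2) (e 1) (e 1) = ((C-D)^2/8) • e 2 ∧
    weyl Θ (e 1) (e 2) (e 0) = -((C-D)^2/8) • e 2 ∧
    weyl Θ (e 2) (e 0) (e 2) = ((A+B)*(D-C)/4) • e 0 + (B*(C-D)/2) • e 1 ∧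
    weyl Θ (e 1) (e 2) (e 2) = (A*(C-D)/2) • e 0 + ((A+B)*(D-C)/4) • e 1 := by
  have h : IsTheta A B C D E Θ := ⟨hsymm, h11, h22, h33, h12, h13, h23⟩
  refine ⟨?_, ?_, ?_, ?_, ?_, ?_, ?_, ?_, ?_⟩ <;>
  · simp only [weyl_eq_curv_sub_ricci, curv, h.ricci_apply, h.e00, h.e11, h.e22, h.e01, h.e02,
      h.e12, h.e10, h.e20, h.e21, map_add, map_smul]
    ext i
    fin_cases i <;> simp [e] <;> ring
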